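/- arXiv:2508.11525 — 3 statements merged into one kernel-verified Lean document; each statement's English description precedes it below -/
import Mathlib

section
/- For every finite group H there exists an injective monoid homomorphism from H into the monoid M of injective self-maps of ℕ (under composition) whose image H' ⊆ M makes ℕ a complete H'-set universe, i.e. every finite H-set admits an H-equivariant injection into ℕ with the induced action. -/
/-- The monoid of injective self-maps of `ℕ` (under composition),
as a submonoid of `Function.End ℕ`. -/
def InjM : Submonoid (Function.End ℕ) where
  carrier := {f | Function.Injective f}
  one_mem' := fun _ _ h => h
  mul_mem' := fun hf hg => hf.comp hg

/-- For every finite group `H` there is an injective monoid homomorphism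
`H → M` into the monoid of injective self-maps of `ℕ` whose image is a
universal subgroup: every finite `H`-set embeds `H`-equivariantly into `ℕ`
with the induced action. -/
theorem exists_universal_embedding (H : Type) [Group H] [Fintype H] :
    ∃ φ : H →* InjM, Function.Injective φ ∧
      ∀ (X : Type) [Fintype X] [MulAction H X],
        ∃ e : X → ℕ, Function.Injective e ∧
          ∀ (h : H) (x : X), e (h • x) = (φ h : Function.End ℕ) (e x) := by
  classical
  obtain ⟨b⟩ : Nonempty ((H → ℕ) ≃ ℕ) := by
    have : Infinite (H → ℕ) := Pi.infinite_of_right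
    exact nonempty_equiv_of_countable
  -- the right-translation action of `H` on `H → ℕ`
  let A : H → (H → ℕ) → (H → ℕ) := fun g f h => f (h * g)
  have hAinv : ∀ g : H, Function.LeftInverse (A g⁻¹) (A g) := by
    intro g f
    funext h
    simp [A]
  have hAinj : ∀ g : H, Function.Injective (A g) :=
    fun g => (hAinv g).injective
  have hmem : ∀ g : H, (⇑b ∘ A g ∘ ⇑b.symm : Function.End ℕ) ∈ InjM := by
    intro g
    exact b.injective.comp ((hAinj g).comp b.symm.injective)
  refine ⟨{ toFun := fun g => ⟨⇑b ∘ A g ∘ ⇑b.symm, hmem g⟩,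
            map_one' := ?_, map_mul' := ?_ }, ?_, ?_⟩
  · refine Subtype.ext (funext fun n => ?_)
    show b (A 1 (b.symm n)) = n
    simp [A]
  · intro g₁ g₂
    refine Subtype.ext (funext fun n => ?_)
    show b (A (g₁ * g₂) (b.symm n)) = b (A g₁ (b.symm (b (A g₂ (b.symm n)))))
    rw [b.symm_apply_apply]
    congr 1
    funext h
    simp [A, mul_assoc]
  · -- injectivity of φ
    intro g₁ g₂ hgg
    have hfun : (⇑b ∘ A g₁ ∘ ⇑b.symm : ℕ → ℕ) = ⇑b ∘ A g₂ ∘ ⇑b.symm :=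
      congrArg Subtype.val hgg
    have hA : A g₁ = A g₂ := by
      funext f
      have := congrFun hfun (b f)
      simp only [Function.comp_apply, b.symm_apply_apply] at this
      exact b.injective this
    letI : Encodable H := Fintype.toEncodable H
    have henc := congrFun (congrFun hA (fun h => Encodable.encode h)) 1
    simp only [A, one_mul] at henc
    exact Encodable.encode_injective henc
  · -- universality
    intro X _ _
    have : Encodable X := Fintype.toEncodable X
    refine ⟨fun x => b (fun h => Encodable.encode (h • x)), ?_, ?_⟩
    · intro x y hxy
      have := congrFun (b.injective hxy) 1
      simp only [one_smul] at this
      exact Encodable.encode_injective this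
    · intro g x
      show b _ = b (A g (b.symm (b _)))
      rw [b.symm_apply_apply]
      congr 1
      funext h
      simp [A, mul_smul]
end

section
/- Given a commutative square of groupoids which is a pullback, the Beck–Chevalley natural transformation g_! ∘ f'* → f* ∘ h_! between functors on slice categories 𝔾/H' → 𝔾/G is a natural isomorphism; this is equivalent to the pasting law for pullback squares. -/
open CategoryTheory CategoryTheory.Limits

/-- The category `𝔾` of finite groupoids. -/
def FinGrpd :=
  ObjectProperty.FullSubcategory (fun G : Grpd.{0, 0} => Finite G ∧ ∀ x y : G, Finite (x ⟶ y))

instance : Category FinGrpd := ObjectProperty.FullSubcategory.category _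

namespace FGPb

variable {A B C : Type} [Groupoid A] [Groupoid B] [Groupoid C]

/-- strict pullback of groupoids -/
@[ext]
structure Obj (F : A ⥤ C) (G : B ⥤ C) where
  a : A
  b : B
  w : F.obj a = G.obj b

variable {F : A ⥤ C} {G : B ⥤ C}

@[ext]
structure Hom (x y : Obj F G) where
  a : x.a ⟶ y.a
  b : x.b ⟶ y.b
  w : F.map a = eqToHom x.w ≫ G.map b ≫ eqToHom y.w.symm

instance : Category (Obj F G) where
  Hom := Hom
  id x := ⟨𝟙 _, 𝟙 _, by simp⟩
  comp u v := ⟨u.a ≫ v.a, u.b ≫ v.b, by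
    rw [Functor.map_comp, Functor.map_comp, u.w, v.w]; simp⟩

@[simp] lemma id_a (x : Obj F G) : Hom.a (𝟙 x) = 𝟙 x.a := rfl
@[simp] lemma id_b (x : Obj F G) : Hom.b (𝟙 x) = 𝟙 x.b := rfl
@[simp] lemma comp_a {x y z : Obj F G} (u : x ⟶ y) (v : y ⟶ z) :
    (u ≫ v).a = u.a ≫ v.a := rfl
@[simp] lemma comp_b {x y z : Obj F G} (u : x ⟶ y) (v : y ⟶ z) :
    (u ≫ v).b = u.b ≫ v.b := rfl

@[ext] lemma hom_ext {x y : Obj F G} (u v : x ⟶ y) (ha : u.a = v.a) (hb : u.b = v.b) : u = v :=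
  Hom.ext ha hb

instance : Groupoid (Obj F G) where
  inv u := ⟨Groupoid.inv u.a, Groupoid.inv u.b, by
    have ha : F.map (Groupoid.inv u.a) = inv (F.map u.a) := by
      rw [Groupoid.inv_eq_inv, Functor.map_inv]
    have hb : G.map (Groupoid.inv u.b) = inv (G.map u.b) := by
      rw [Groupoid.inv_eq_inv, Functor.map_inv]
    rw [ha, hb]
    apply IsIso.inv_eq_of_hom_inv_id
    rw [u.w]
    simp⟩
  inv_comp u := by apply hom_ext <;> simp [Groupoid.inv_eq_inv]
  comp_inv u := by apply hom_ext <;> simp [Groupoid.inv_eq_inv]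


instance [Finite A] [Finite B] : Finite (Obj F G) :=
  Finite.of_injective (fun x => (x.a, x.b)) (by intro x y h; ext <;> simp_all)

instance (x y : Obj F G) [Finite (x.a ⟶ y.a)] [Finite (x.b ⟶ y.b)] : Finite (Hom x y) :=
  Finite.of_injective (fun u => (u.a, u.b))
    (by intro u v h; ext <;> simp_all)

instance (x y : Obj F G) [Finite (x.a ⟶ y.a)] [Finite (x.b ⟶ y.b)] : Finite (x ⟶ y) :=
  inferInstanceAs (Finite (Hom x y))

/-- first projection -/
def fst : Obj F G ⥤ A where
  obj x := x.a
  map u := u.a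

/-- second projection -/
def snd : Obj F G ⥤ B where
  obj x := x.b
  map u := u.b

lemma comm : (fst ⋙ F : Obj F G ⥤ C) = snd ⋙ G :=
  CategoryTheory.Functor.ext (fun (x : Obj F G) => x.w) (fun _ _ u => u.w)

variable {X : Type} [Groupoid X]

/-- lift -/
def lift (S : X ⥤ A) (T : X ⥤ B) (w : S ⋙ F = T ⋙ G) : X ⥤ Obj F G where
  obj x := ⟨S.obj x, T.obj x, Functor.congr_obj w x⟩
  map u := ⟨S.map u, T.map u, by simpa using Functor.congr_hom w u⟩
  map_id x := by ext <;> simp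
  map_comp u v := by ext <;> simp

lemma lift_fst (S : X ⥤ A) (T : X ⥤ B) (w : S ⋙ F = T ⋙ G) : lift S T w ⋙ fst = S := rfl
lemma lift_snd (S : X ⥤ A) (T : X ⥤ B) (w : S ⋙ F = T ⋙ G) : lift S T w ⋙ snd = T := rfl

@[simp] lemma eqToHom_a {x y : Obj F G} (e : x = y) : (eqToHom e).a = eqToHom (by rw [e]) := by
  subst e; simp
@[simp] lemma eqToHom_b {x y : Obj F G} (e : x = y) : (eqToHom e).b = eqToHom (by rw [e]) := by
  subst e; simp

lemma hom_ext_functor (Φ Ψ : X ⥤ Obj F G) (h1 : Φ ⋙ fst = Ψ ⋙ fst)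
    (h2 : Φ ⋙ snd = Ψ ⋙ snd) : Φ = Ψ := by
  apply CategoryTheory.Functor.ext
  case h_obj =>
    intro x
    ext
    · exact Functor.congr_obj h1 x
    · exact Functor.congr_obj h2 x
  case h_map =>
    intro x y u
    ext
    · simpa [fst] using Functor.congr_hom h1 u
    · simpa [snd] using Functor.congr_hom h2 u

end FGPb

namespace FinGrpdPB
open FGPb

/-- underlying type of a finite groupoid -/
def Und (X : FinGrpd) : Type := (ObjectProperty.FullSubcategory.obj X : Grpd.{0,0})

instance (X : FinGrpd) : Groupoid (Und X) := Grpd.str' _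
instance fin1 (X : FinGrpd) : Finite (Und X) := (ObjectProperty.FullSubcategory.property X).1
instance fin2 (X : FinGrpd) (x y : Und X) : Finite (x ⟶ y) := (ObjectProperty.FullSubcategory.property X).2 x y

/-- underlying functor of a FinGrpd morphism -/
def toFun {X Y : FinGrpd} (f : X ⟶ Y) : Und X ⥤ Und Y := f.hom

variable {X Y Z : FinGrpd} (f : X ⟶ Z) (g : Y ⟶ Z)

/-- the pullback object in FinGrpd -/
def pt : FinGrpd :=
  ObjectProperty.FullSubcategory.mk (Grpd.of (FGPb.Obj (toFun f) (toFun g)))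
    ⟨inferInstanceAs (Finite (FGPb.Obj (toFun f) (toFun g))),
    fun (x y : FGPb.Obj (toFun f) (toFun g)) => inferInstanceAs (Finite (FGPb.Hom x y))⟩

/-- the pullback cone in FinGrpd -/
def cone : PullbackCone f g :=
  PullbackCone.mk (W := pt f g)
    (fst := ObjectProperty.homMk (FGPb.fst : FGPb.Obj (toFun f) (toFun g) ⥤ Und X))
    (snd := ObjectProperty.homMk (FGPb.snd : FGPb.Obj (toFun f) (toFun g) ⥤ Und Y))
    (ObjectProperty.hom_ext _ FGPb.comm)

def coneIsLimit : IsLimit (cone f g) :=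
  PullbackCone.IsLimit.mk _
    (fun s => ObjectProperty.homMk (FGPb.lift (toFun s.fst) (toFun s.snd) (congrArg (fun k => k.hom) s.condition) : Und s.pt ⥤ FGPb.Obj (toFun f) (toFun g)))
    (fun s => rfl)
    (fun s => rfl)
    (fun s m h1 h2 => ObjectProperty.hom_ext _ (FGPb.hom_ext_functor _ _ (congrArg (fun k => k.hom) h1) (congrArg (fun k => k.hom) h2)))

instance (X Y Z : FinGrpd) (f : X ⟶ Z) (g : Y ⟶ Z) : HasLimit (cospan f g) :=
  HasLimit.mk ⟨cone f g, coneIsLimit f g⟩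

instance : HasPullbacks FinGrpd := hasPullbacks_of_hasLimit_cospan _

end FinGrpdPB

namespace BCAux

universe v u
variable {C : Type u} [Category.{v} C]

/-- transfer IsIso of mate across different choices of right adjoints -/
theorem isIso_mate_transfer {A B D E : Type*} [Category A] [Category B] [Category D] [Category E]
    {G : A ⥤ D} {Hf : B ⥤ E}
    {L₁ : A ⥤ B} {R₁ R₁' : B ⥤ A} {L₂ : D ⥤ E} {R₂ R₂' : E ⥤ D}
    (adj₁ : L₁ ⊣ R₁) (adj₁' : L₁ ⊣ R₁') (adj₂ : L₂ ⊣ R₂) (adj₂' : L₂ ⊣ R₂')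
    (α : G ⋙ L₂ ⟶ L₁ ⋙ Hf) [IsIso (mateEquiv adj₁ adj₂ α)] :
    IsIso (mateEquiv adj₁' adj₂' α) := by
  have h1 := conjugateEquiv_mateEquiv_vcomp adj₁' adj₁ adj₂ (𝟙 L₁) α
  unfold TwoSquare.whiskerLeft TwoSquare.whiskerTop at h1
  simp only [Functor.whiskerRight_id'] at h1
  rw [Category.comp_id] at h1
  have i1 : IsIso (conjugateEquiv adj₁' adj₁ (𝟙 L₁)) := by
    have : conjugateEquiv adj₁' adj₁ (𝟙 L₁) = (conjugateIsoEquiv adj₁' adj₁ (Iso.refl L₁)).hom := rfl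
    rw [this]; infer_instance
  have i2 : IsIso (mateEquiv adj₁' adj₂ α) := by
    rw [h1]; infer_instance
  have h2 := mateEquiv_conjugateEquiv_vcomp adj₁' adj₂' adj₂ α (𝟙 L₂)
  unfold TwoSquare.whiskerRight TwoSquare.whiskerBottom at h2
  simp only [Functor.whiskerLeft_id'] at h2
  rw [Category.id_comp] at h2
  have i3 : IsIso (conjugateEquiv adj₂' adj₂ (𝟙 L₂)) := by
    have : conjugateEquiv adj₂' adj₂ (𝟙 L₂) = (conjugateIsoEquiv adj₂' adj₂ (Iso.refl L₂)).hom := rfl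
    rw [this]; infer_instance
  have i4 : IsIso (Functor.whiskerLeft Hf (conjugateEquiv adj₂' adj₂ (𝟙 L₂))) := by infer_instance
  have i5 : IsIso (mateEquiv adj₁' adj₂' α ≫ Functor.whiskerLeft Hf (conjugateEquiv adj₂' adj₂ (𝟙 L₂))) := by
    rw [show mateEquiv adj₁' adj₂' α ≫ Functor.whiskerLeft Hf (conjugateEquiv adj₂' adj₂ (𝟙 L₂)) = _ from h2.symm]; exact i2
  exact IsIso.of_isIso_comp_right (mateEquiv adj₁' adj₂' α) (Functor.whiskerLeft Hf (conjugateEquiv adj₂' adj₂ (𝟙 L₂)))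

variable [HasPullbacks C]

theorem bc_iso {G' H' G H : C} (f' : G' ⟶ H') (g : G' ⟶ G) (f : G ⟶ H) (h : H' ⟶ H)
    (sq : IsPullback g f' f h) :
    IsIso (mateEquiv (Over.mapPullbackAdj f') (Over.mapPullbackAdj f)
      ((Over.mapComp g f).symm ≪≫ eqToIso (by rw [sq.w]) ≪≫ Over.mapComp f' h).hom) := by
  set α := ((Over.mapComp g f).symm ≪≫ eqToIso (by rw [sq.w]) ≪≫ Over.mapComp f' h).hom with hα
  set m := mateEquiv (Over.mapPullbackAdj f') (Over.mapPullbackAdj f) α with hm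
  have compIso : ∀ X : Over H', IsIso (m.app X) := by
    intro X
    -- the big pullback
    have small : IsPullback (pullback.fst X.hom f') (pullback.snd X.hom f') X.hom f' :=
      IsPullback.of_hasPullback _ _
    have big : IsPullback (pullback.fst X.hom f') (pullback.snd X.hom f' ≫ g) (X.hom ≫ h) f :=
      small.paste_vert sq.flip
    have canon : IsPullback (pullback.fst ((Over.map h).obj X).hom f)
        (pullback.snd ((Over.map h).obj X).hom f) ((Over.map h).obj X).hom f :=
      IsPullback.of_hasPullback _ _
    have big' : IsPullback (pullback.fst X.hom f') (pullback.snd X.hom f' ≫ g)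
        ((Over.map h).obj X).hom f := by simpa using big
    have E1 : (m.app X).left ≫ pullback.fst ((Over.map h).obj X).hom f
        = pullback.fst X.hom f' := by
      simp [hm, hα, mateEquiv, Over.mapComp, Over.mapPullbackAdj, Over.pullback]
      erw [pullback.lift_fst]
      erw [pullback.lift_fst_assoc]
      erw [pullback.lift_fst_assoc]
      erw [pullback.lift_fst_assoc]
      erw [pullback.lift_fst_assoc]
      simp
    have E2 : (m.app X).left ≫ pullback.snd ((Over.map h).obj X).hom f
        = pullback.snd X.hom f' ≫ g := by
      simpa using Over.w (m.app X)
    have heq : (m.app X).left = (big'.isoIsPullback _ _ canon).hom := by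
      apply pullback.hom_ext
      · rw [E1, big'.isoIsPullback_hom_fst]
      · rw [E2, big'.isoIsPullback_hom_snd]
    have : IsIso ((Over.forget G).map (m.app X)) := by
      show IsIso (m.app X).left
      rw [heq]; infer_instance
    exact isIso_of_reflects_iso (m.app X) (Over.forget G)
  exact NatIso.isIso_of_isIso_app m

end BCAux

open BCAux in
/-- Given a pullback square of finite groupoids with `f' : G' ⟶ H'`,
`g : G' ⟶ G`, `f : G ⟶ H`, `h : H' ⟶ H`, the Beck–Chevalley transformation
`g_! ∘ f'* ⟶ f* ∘ h_!` between functors `𝔾/H' → 𝔾/G` — the canonical mate of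
the isomorphism `g_! ⋙ f_! ≅ f'_! ⋙ h_!` with respect to the adjunctions
`f'_! ⊣ f'*` and `f_! ⊣ f*` — is a natural isomorphism. -/
theorem beck_chevalley_iso_of_pullback
    {G' H' G H : FinGrpd} (f' : G' ⟶ H') (g : G' ⟶ G) (f : G ⟶ H) (h : H' ⟶ H)
    (sq : IsPullback g f' f h) :
    (∃ fstar : Over H ⥤ Over G, Nonempty (Over.map f ⊣ fstar)) ∧
    (∃ f'star : Over H' ⥤ Over G', Nonempty (Over.map f' ⊣ f'star)) ∧
    ∀ (fstar : Over H ⥤ Over G) (f'star : Over H' ⥤ Over G')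
      (adj₂ : Over.map f ⊣ fstar) (adj₁ : Over.map f' ⊣ f'star),
      IsIso (mateEquiv adj₁ adj₂
        ((Over.mapComp g f).symm ≪≫ eqToIso (by rw [sq.w]) ≪≫ Over.mapComp f' h).hom) := by
  refine ⟨⟨Over.pullback f, ⟨Over.mapPullbackAdj f⟩⟩,
    ⟨Over.pullback f', ⟨Over.mapPullbackAdj f'⟩⟩, ?_⟩
  intro fstar f'star adj₂ adj₁
  have base := bc_iso f' g f h sq
  exact isIso_mate_transfer (Over.mapPullbackAdj f') adj₁ (Over.mapPullbackAdj f) adj₂ _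
end

section
/- Let C be a complete category (or ∞-category) and s : G → P a fully faithful functor whose essential image is closed under the relevant base change, fitting in a pullback square of categories where the right vertical functor is a right fibration (Grothendieck fibration in groupoids). Then right Kan extension along s satisfies base change: the canonical map f* s_* → s_* f* is an isomorphism. Concretely: for a pullback square of groupoids with s_G : G ↪ (𝔾/G)^op, s_H : H ↪ (𝔾/H)^op the full inclusions of objects with terminal domain, and vertical maps induced by f : G → H, right Kan extension of C-valued functors along s commutes with restriction along f. -/
open CategoryTheory CategoryTheory.Limits

universe v u

namespace RanBaseChangeAux

section

variable {Gc Hc PG PH : Type} [Groupoid.{0} Gc] [Groupoid.{0} Hc] [Groupoid.{0} PG] [Groupoid.{0} PH]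

/-- The strict pullback category of `fP : PG ⥤ PH` and `sH : Hc ⥤ PH`: objects. -/
structure PBC (sH : Hc ⥤ PH) (fP : PG ⥤ PH) : Type where
  a : PG
  b : Hc
  eq : fP.obj a = sH.obj b

variable {sH : Hc ⥤ PH} {fP : PG ⥤ PH}

/-- morphisms in the strict pullback category -/
@[ext]
structure PBCHom (p q : PBC sH fP) : Type where
  ma : p.a ⟶ q.a
  mb : p.b ⟶ q.b
  w : fP.map ma = eqToHom p.eq ≫ sH.map mb ≫ eqToHom q.eq.symm

instance : Category (PBC sH fP) where
  Hom p q := PBCHom p q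
  id p := ⟨𝟙 _, 𝟙 _, by simp⟩
  comp m n := ⟨m.ma ≫ n.ma, m.mb ≫ n.mb, by
    rw [Functor.map_comp, Functor.map_comp, m.w, n.w]; simp⟩
  id_comp m := by apply PBCHom.ext <;> simp
  comp_id m := by apply PBCHom.ext <;> simp
  assoc f g h := by apply PBCHom.ext <;> simp

variable (sH fP)

/-- first projection -/
def Pfst : PBC sH fP ⥤ PG where
  obj p := p.a
  map m := m.ma

/-- second projection -/
def Psnd : PBC sH fP ⥤ Hc where
  obj p := p.b
  map m := m.mb

lemma pbc_w : Pfst sH fP ⋙ fP = Psnd sH fP ⋙ sH :=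
  CategoryTheory.Functor.ext (h_obj := fun p => p.eq) (h_map := fun p q m => m.w)

end

section

variable {Gc Hc PG PH : Type} [Groupoid.{0} Gc] [Groupoid.{0} Hc] [Groupoid.{0} PG]
  [Groupoid.{0} PH]
variable (sG : Gc ⥤ PG) (sH : Hc ⥤ PH) (fGH : Gc ⥤ Hc) (fP : PG ⥤ PH)

/-- Hom-sets in structured arrow categories over a groupoid along a faithful functor
are subsingletons. -/
instance sa_subsingleton [sH.Faithful] (X : PH) (j j' : StructuredArrow X sH) :
    Subsingleton (j ⟶ j') := by
  constructor
  intro r s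
  apply StructuredArrow.hom_ext
  apply sH.map_injective
  have hr := StructuredArrow.w r
  have hs := StructuredArrow.w s
  calc sH.map r.right = inv j.hom ≫ (j.hom ≫ sH.map r.right) := by simp
    _ = inv j.hom ≫ (j.hom ≫ sH.map s.right) := by rw [hr, hs]
    _ = sH.map s.right := by simp

variable (sqw : sG ⋙ fP = fGH ⋙ sH)

/-- The comparison functor between structured arrow categories. -/
@[simps]
def Theta (X : PG) : StructuredArrow X sG ⥤ StructuredArrow (fP.obj X) sH where
  obj j := StructuredArrow.mk
    (Y := fGH.obj j.right) (fP.map j.hom ≫ eqToHom (Functor.congr_obj sqw j.right))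
  map {j j'} r := StructuredArrow.homMk (fGH.map r.right) (by
    have h := Functor.congr_hom sqw r.right
    dsimp at h ⊢
    rw [← StructuredArrow.w r, Functor.map_comp, h]
    simp)
  map_id j := by apply StructuredArrow.hom_ext; simp
  map_comp f g := by apply StructuredArrow.hom_ext; simp

instance theta_faithful [sG.Faithful] [sH.Faithful] (X : PG) : (Theta sG sH fGH fP sqw X).Faithful where
  map_injective := fun {j j'} r s _ => Subsingleton.elim r s

instance theta_full [sG.Full] [sG.Faithful] [sH.Faithful] (X : PG) :
    (Theta sG sH fGH fP sqw X).Full where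
  map_surjective := fun {j j'} s => by
    refine ⟨StructuredArrow.homMk (sG.preimage (inv j.hom ≫ j'.hom)) (by simp), ?_⟩
    exact Subsingleton.elim _ _

end

section

variable {Gc Hc PG PH : Type} [Groupoid.{0} Gc] [Groupoid.{0} Hc] [Groupoid.{0} PG]
  [Groupoid.{0} PH]
variable (sG : Gc ⥤ PG) (sH : Hc ⥤ PH) (fGH : Gc ⥤ Hc) (fP : PG ⥤ PH)
variable (sqw : sG ⋙ fP = fGH ⋙ sH)

lemma theta_essSurj [sG.Faithful] [sH.Faithful]
    (L : PBC sH fP ⥤ Gc) (hL1 : L ⋙ sG = Pfst sH fP) (hL2 : L ⋙ fGH = Psnd sH fP)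
    (hfib : ∀ (X : PG) (Y : PH) (e : fP.obj X ≅ Y),
      ∃ (X' : PG) (e' : X ≅ X') (h : fP.obj X' = Y),
        fP.mapIso e' = e ≪≫ eqToIso h.symm)
    (X : PG) : (Theta sG sH fGH fP sqw X).EssSurj := by
  constructor
  intro o
  obtain ⟨X', e', hEq, hcomp⟩ := hfib X (sH.obj o.right) (asIso o.hom)
  have hc : fP.map e'.hom = o.hom ≫ eqToHom hEq.symm := by
    simpa using congrArg Iso.hom hcomp
  set p : PBC sH fP := ⟨X', o.right, hEq⟩ with hp
  have h1 : sG.obj (L.obj p) = X' := Functor.congr_obj hL1 p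
  have h2 : fGH.obj (L.obj p) = o.right := Functor.congr_obj hL2 p
  refine ⟨StructuredArrow.mk (Y := L.obj p) (e'.hom ≫ eqToHom h1.symm), ⟨?_⟩⟩
  refine StructuredArrow.isoMk (eqToIso h2) ?_
  change (fP.map (e'.hom ≫ eqToHom h1.symm) ≫ eqToHom (Functor.congr_obj sqw (L.obj p))) ≫ sH.map (eqToHom h2) = o.hom
  rw [Functor.map_comp, hc]
  simp [eqToHom_map]

end

section

variable {A B : Type} [Category.{0} A] [Category.{0} B] {C : Type u} [Category.{v} C]

/-- If `F'` is a right Kan extension with an invertible counit `α`, then it is also a right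
Kan extension for any other invertible "counit" `β`. -/
lemma rke_of_isIso (L : A ⥤ B) (Fb : A ⥤ C) (F' : B ⥤ C) (α β : L ⋙ F' ⟶ Fb)
    [IsIso α] [IsIso β] [F'.IsRightKanExtension α] : F'.IsRightKanExtension β := by
  constructor
  refine ⟨IsTerminal.ofUniqueHom (fun G' => ?_) (fun G' m => ?_)⟩
  · refine CostructuredArrow.homMk
      (F'.liftOfIsRightKanExtension α G'.left (G'.hom ≫ inv β ≫ α)) ?_
    have h := F'.liftOfIsRightKanExtension_fac α G'.left (G'.hom ≫ inv β ≫ α)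
    have h2 : Functor.whiskerLeft L (F'.liftOfIsRightKanExtension α G'.left (G'.hom ≫ inv β ≫ α)) =
        G'.hom ≫ inv β := by
      rw [← cancel_mono α]
      simpa using h
    dsimp
    change Functor.whiskerLeft L _ ≫ β = G'.hom
    rw [h2]
    simp
  · have hw := CostructuredArrow.w m
    apply CostructuredArrow.hom_ext
    apply F'.hom_ext_of_isRightKanExtension α
    show Functor.whiskerLeft L m.left ≫ α =
      Functor.whiskerLeft L (F'.liftOfIsRightKanExtension α G'.left (G'.hom ≫ inv β ≫ α)) ≫ α
    rw [F'.liftOfIsRightKanExtension_fac α G'.left (G'.hom ≫ inv β ≫ α)]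
    have h2 : Functor.whiskerLeft L m.left ≫ β = G'.hom := hw
    rw [← h2]
    exact (by simp : ∀ {X : A ⥤ C} (a : X ⟶ L ⋙ F'), a ≫ α = (a ≫ β) ≫ inv β ≫ α) _

/-- Any right adjoint to restriction along `s` gives right Kan extensions. -/
lemma adj_rke (s : A ⥤ B) [∀ K : A ⥤ C, s.HasRightKanExtension K]
    {R : (A ⥤ C) ⥤ (B ⥤ C)} (adj : (Functor.whiskeringLeft A B C).obj s ⊣ R) (K : A ⥤ C) :
    (R.obj K).IsRightKanExtension (adj.counit.app K) := by
  have comm := Adjunction.rightAdjointUniq_hom_app_counit (s.ranAdjunction C) adj K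
  rw [Functor.ranAdjunction_counit] at comm
  exact Functor.isRightKanExtension_of_iso
    ((Adjunction.rightAdjointUniq (s.ranAdjunction C) adj).app K)
    (s.ranCounit.app K) (adj.counit.app K) comm

end

section

variable {Gc Hc PG PH : Type} [Groupoid.{0} Gc] [Groupoid.{0} Hc] [Groupoid.{0} PG]
  [Groupoid.{0} PH]
variable (sG : Gc ⥤ PG) (sH : Hc ⥤ PH) (fGH : Gc ⥤ Hc) (fP : PG ⥤ PH)
variable {C : Type u} [Category.{v} C] [HasLimitsOfSize.{0, 0} C]

lemma key_rke [sG.Full] [sG.Faithful] [sH.Full] [sH.Faithful]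
    (sqw : sG ⋙ fP = fGH ⋙ sH)
    (L : PBC sH fP ⥤ Gc) (hL1 : L ⋙ sG = Pfst sH fP) (hL2 : L ⋙ fGH = Psnd sH fP)
    (hfib : ∀ (X : PG) (Y : PH) (e : fP.obj X ≅ Y),
      ∃ (X' : PG) (e' : X ≅ X') (h : fP.obj X' = Y),
        fP.mapIso e' = e ≪≫ eqToIso h.symm)
    (RanF : PH ⥤ C) (F : Hc ⥤ C) (counit : sH ⋙ RanF ⟶ F)
    [RanF.IsRightKanExtension counit] [IsIso counit]
    (γ : sG ⋙ (fP ⋙ RanF) ⟶ fGH ⋙ F) [IsIso γ] :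
    (fP ⋙ RanF).IsRightKanExtension γ := by
  haveI : Functor.HasPointwiseRightKanExtension sH F := fun Y => inferInstance
  have pw := Functor.isPointwiseRightKanExtensionOfIsRightKanExtension RanF counit
  have hfeq : sG ⋙ (fP ⋙ RanF) = fGH ⋙ (sH ⋙ RanF) := by
    rw [← Functor.assoc, sqw, Functor.assoc]
  have hβ : IsIso (eqToHom hfeq ≫ Functor.whiskerLeft fGH counit) := inferInstance
  haveI : (fP ⋙ RanF).IsRightKanExtension (eqToHom hfeq ≫ Functor.whiskerLeft fGH counit) := by
    apply Functor.RightExtension.IsPointwiseRightKanExtension.isRightKanExtension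
      (E := Functor.RightExtension.mk _ (eqToHom hfeq ≫ Functor.whiskerLeft fGH counit))
    intro X
    haveI := theta_essSurj sG sH fGH fP sqw L hL1 hL2 hfib X
    haveI : (Theta sG sH fGH fP sqw X).IsEquivalence :=
      { faithful := inferInstance, full := inferInstance, essSurj := inferInstance }
    have w := (pw (fP.obj X)).whiskerEquivalence (Theta sG sH fGH fP sqw X).asEquivalence
    exact IsLimit.ofIsoLimit w (Cones.ext (Iso.refl _) (fun j => by
      dsimp [Theta, Functor.RightExtension.coneAt, Functor.asEquivalence]
      simp [eqToHom_app, eqToHom_map]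
      erw [Category.id_comp, Category.assoc]
      rfl))
  exact rke_of_isIso sG (fGH ⋙ F) (fP ⋙ RanF) (eqToHom hfeq ≫ Functor.whiskerLeft fGH counit) γ

end

end RanBaseChangeAux

/-- Base change for right Kan extension along the fully faithful inclusions
`s_G : G ↪ (𝔾/G)ᵒᵖ`, `s_H : H ↪ (𝔾/H)ᵒᵖ`: given a (strict) pullback square of
groupoids whose right vertical functor is an isofibration (a Grothendieck
fibration in groupoids) and whose horizontal functors are fully faithful, and
a complete target category `C`, restriction along the horizontal functors
admits right adjoints (right Kan extension), and the Beck–Chevalley map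
`f* ∘ (s_H)_* ⟶ (s_G)_* ∘ f*` — the mate of the canonical isomorphism filling
the square of restriction functors — is invertible. -/
theorem ran_base_change
    (Gc Hc PG PH : Type) [Groupoid Gc] [Groupoid Hc] [Groupoid PG] [Groupoid PH]
    (sG : Gc ⥤ PG) (sH : Hc ⥤ PH) (fGH : Gc ⥤ Hc) (fP : PG ⥤ PH)
    [sG.Full] [sG.Faithful] [sH.Full] [sH.Faithful]
    (sq : IsPullback (C := Cat.{0, 0}) (X := Cat.of PG) (Y := Cat.of Hc)
      (Z := Cat.of PH) (P := Cat.of Gc) sG.toCatHom fGH.toCatHom fP.toCatHom sH.toCatHom)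
    (hfib : ∀ (X : PG) (Y : PH) (e : fP.obj X ≅ Y),
      ∃ (X' : PG) (e' : X ≅ X') (h : fP.obj X' = Y),
        fP.mapIso e' = e ≪≫ eqToIso h.symm)
    (C : Type u) [Category.{v} C] [HasLimitsOfSize.{0, 0} C] :
    (∃ ranSG : (Gc ⥤ C) ⥤ (PG ⥤ C),
      Nonempty ((Functor.whiskeringLeft Gc PG C).obj sG ⊣ ranSG)) ∧
    (∃ ranSH : (Hc ⥤ C) ⥤ (PH ⥤ C),
      Nonempty ((Functor.whiskeringLeft Hc PH C).obj sH ⊣ ranSH)) ∧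
    ∀ (ranSG : (Gc ⥤ C) ⥤ (PG ⥤ C)) (ranSH : (Hc ⥤ C) ⥤ (PH ⥤ C))
      (adjG : (Functor.whiskeringLeft Gc PG C).obj sG ⊣ ranSG)
      (adjH : (Functor.whiskeringLeft Hc PH C).obj sH ⊣ ranSH)
      (ι : (Functor.whiskeringLeft PG PH C).obj fP ⋙ (Functor.whiskeringLeft Gc PG C).obj sG ≅
           (Functor.whiskeringLeft Hc PH C).obj sH ⋙ (Functor.whiskeringLeft Gc Hc C).obj fGH),
      IsIso (mateEquiv adjH adjG (ι.hom : TwoSquare ((Functor.whiskeringLeft PG PH C).obj fP)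
        ((Functor.whiskeringLeft Hc PH C).obj sH) ((Functor.whiskeringLeft Gc PG C).obj sG)
        ((Functor.whiskeringLeft Gc Hc C).obj fGH))) := by
  haveI : ∀ (K : Gc ⥤ C), Functor.HasPointwiseRightKanExtension sG K := fun K Y => inferInstance
  haveI : ∀ (K : Hc ⥤ C), Functor.HasPointwiseRightKanExtension sH K := fun K Y => inferInstance
  haveI : ∀ (K : Gc ⥤ C), sG.HasRightKanExtension K := fun K => inferInstance
  haveI : ∀ (K : Hc ⥤ C), sH.HasRightKanExtension K := fun K => inferInstance
  refine ⟨⟨sG.ran, ⟨sG.ranAdjunction C⟩⟩, ⟨sH.ran, ⟨sH.ranAdjunction C⟩⟩, ?_⟩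
  intro ranSG ranSH adjG adjH ι
  -- data from the strict pullback property
  have sqw : sG ⋙ fP = fGH ⋙ sH := congrArg Cat.Hom.toFunctor sq.w
  let pf : Cat.of (RanBaseChangeAux.PBC sH fP) ⟶ Cat.of PG := (RanBaseChangeAux.Pfst sH fP).toCatHom
  let ps : Cat.of (RanBaseChangeAux.PBC sH fP) ⟶ Cat.of Hc := (RanBaseChangeAux.Psnd sH fP).toCatHom
  let fPc : Cat.of PG ⟶ Cat.of PH := fP.toCatHom
  let sHc : Cat.of Hc ⟶ Cat.of PH := sH.toCatHom
  have pw : pf ≫ fPc = ps ≫ sHc := congrArg Functor.toCatHom (RanBaseChangeAux.pbc_w sH fP)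
  let Lf : RanBaseChangeAux.PBC sH fP ⥤ Gc := (sq.lift pf ps pw).toFunctor
  have hL1 : Lf ⋙ sG = RanBaseChangeAux.Pfst sH fP := congrArg Cat.Hom.toFunctor (sq.lift_fst pf ps pw)
  have hL2 : Lf ⋙ fGH = RanBaseChangeAux.Psnd sH fP := congrArg Cat.Hom.toFunctor (sq.lift_snd pf ps pw)
  suffices h : ∀ F : Hc ⥤ C, IsIso ((mateEquiv adjH adjG ι.hom).app F) by
    exact NatIso.isIso_of_isIso_app _
  intro F
  haveI : (ranSH.obj F).IsRightKanExtension (adjH.counit.app F) := RanBaseChangeAux.adj_rke sH adjH F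
  haveI : (ranSG.obj (fGH ⋙ F)).IsRightKanExtension (adjG.counit.app (fGH ⋙ F)) :=
    RanBaseChangeAux.adj_rke sG adjG _
  haveI : IsIso (adjH.counit.app F) := by
    have comm := Adjunction.rightAdjointUniq_hom_app_counit (sH.ranAdjunction C) adjH F
    rw [Functor.ranAdjunction_counit] at comm
    have : adjH.counit.app F =
        inv (((Functor.whiskeringLeft Hc PH C).obj sH).map
          ((Adjunction.rightAdjointUniq (sH.ranAdjunction C) adjH).hom.app F)) ≫
          sH.ranCounit.app F := by
      rw [← comm, IsIso.inv_hom_id_assoc]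
    rw [this]
    infer_instance
  haveI : (fP ⋙ ranSH.obj F).IsRightKanExtension
      (ι.hom.app (ranSH.obj F) ≫ Functor.whiskerLeft fGH (adjH.counit.app F)) :=
    RanBaseChangeAux.key_rke sG sH fGH fP sqw Lf hL1 hL2 hfib (ranSH.obj F) F (adjH.counit.app F) _
  have comm := mateEquiv_counit adjH adjG ι.hom F
  exact (Functor.isRightKanExtension_iff_isIso
    (show (fP ⋙ ranSH.obj F) ⟶ ranSG.obj (fGH ⋙ F) from (mateEquiv adjH adjG ι.hom).app F)
    (adjG.counit.app (fGH ⋙ F))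
    (ι.hom.app (ranSH.obj F) ≫ Functor.whiskerLeft fGH (adjH.counit.app F)) comm).mp inferInstance
end
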